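/- arXiv:2101.07545 — 2 statements merged into one kernel-verified Lean document; each statement's English description precedes it below -/
import Mathlib

section
/- Let H be a real Hilbert space, λ ∈ ℝ, and let f_h, f : H → (-∞,∞] be proper, λ-convex, lower semicontinuous functions such that: for every x ∈ H there exist y_h → x strongly with limsup_h f_h(y_h) ≤ f(x), and for every sequence x_h → x strongly, liminf_h f_h(x_h) ≥ f(x). Then for every x ∈ H and every sequence x_h → x strongly, one has liminf_h |∇f_h|(x_h) ≥ |∇f|(x). -/
open Filter Topology MeasureTheory Set
open scoped ENNReal RealInnerProductSpace

noncomputable section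

attribute [local instance] Classical.propDecidable

variable {H : Type*} [NormedAddCommGroup H] [InnerProductSpace ℝ H] [CompleteSpace H]

/-- `f : H → (-∞,∞]` is proper: not identically `⊤` (and it never takes the value `⊥`). -/
def ProperFn (f : H → EReal) : Prop :=
  (∃ x, f x ≠ ⊤) ∧ ∀ x, f x ≠ ⊥

/-- `f` is `λ`-convex: `x ↦ f x - (λ/2)‖x‖²` is convex, expressed via the perturbed
convexity inequality. -/
def LambdaConvex (lam : ℝ) (f : H → EReal) : Prop :=
  ∀ x y : H, ∀ t : ℝ, 0 ≤ t → t ≤ 1 →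
    f ((1 - t) • x + t • y)
      ≤ ((1 - t : ℝ) : EReal) * f x + ((t : ℝ) : EReal) * f y
        - ((lam / 2 * (t * (1 - t)) * ‖x - y‖ ^ 2 : ℝ) : EReal)

/-- The subdifferential of a `λ`-convex function at `x` (contained in the domain of `f`). -/
def subdiff (lam : ℝ) (f : H → EReal) (x : H) : Set H :=
  {p : H | f x ≠ ⊤ ∧
    ∀ y : H, f x + ((⟪p, y - x⟫ + lam / 2 * ‖y - x‖ ^ 2 : ℝ) : EReal) ≤ f y}

/-- `∇f(x)`: the element of minimal norm of `∂f(x)` (junk value `0` if there is none). -/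
def gradMin (lam : ℝ) (f : H → EReal) (x : H) : H :=
  if h : ∃ p ∈ subdiff lam f x, ∀ q ∈ subdiff lam f x, ‖p‖ ≤ ‖q‖ then h.choose else 0

/-- `|∇f|(x) ∈ [0,∞]`, equal to `+∞` when `∂f(x) = ∅` (in particular when `f x = ⊤`). -/
def gradNorm (lam : ℝ) (f : H → EReal) (x : H) : ℝ≥0∞ :=
  if (subdiff lam f x).Nonempty then ENNReal.ofReal ‖gradMin lam f x‖ else ⊤

/-- The resolvent `J_τ(x)`: the minimizer of `y ↦ f y + ‖y-x‖²/(2τ)` (junk `0` if none). -/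
def Jres (f : H → EReal) (τ : ℝ) (x : H) : H :=
  if h : ∃ y : H, ∀ z : H,
      f y + ((‖y - x‖ ^ 2 / (2 * τ) : ℝ) : EReal)
        ≤ f z + ((‖z - x‖ ^ 2 / (2 * τ) : ℝ) : EReal)
  then h.choose else 0

/-- The Moreau–Yosida regularization `f_τ(x) = min_y (f y + ‖y-x‖²/(2τ))`. -/
def moreau (f : H → EReal) (τ : ℝ) (x : H) : ℝ :=
  (f (Jres f τ x)).toReal + ‖Jres f τ x - x‖ ^ 2 / (2 * τ)

/-- `γ` is absolutely continuous on `[a,b]` with an integrable derivative. -/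
abbrev IsACCurve (a b : ℝ) (γ : ℝ → H) : Prop :=
  ∃ g : ℝ → H, IntegrableOn g (Icc a b) ∧ ∀ t ∈ Icc a b, γ t = γ a + ∫ s in a..t, g s

/-- The action `I_f^{[a,b]}(γ) = ∫_a^b (‖γ̇‖² + |∇f|²(γ)) dt ∈ [0,∞]`, set to `+∞` when `γ`
is not absolutely continuous. -/
def actionFn (lam : ℝ) (f : H → EReal) (a b : ℝ) (γ : ℝ → H) : ℝ≥0∞ :=
  if h : IsACCurve a b γ then
    ∫⁻ t in Ioc a b, (ENNReal.ofReal (‖h.choose t‖ ^ 2) + gradNorm lam f (γ t) ^ 2)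
  else ⊤

/-- `Θ_{f,x₀,x₁}`: the action on `[0,1]` with endpoint constraints. -/
def Theta (lam : ℝ) (f : H → EReal) (x0 x1 : H) (γ : ℝ → H) : ℝ≥0∞ :=
  if γ 0 = x0 ∧ γ 1 = x1 then actionFn lam f 0 1 γ else ⊤

/-- `Γ_δ(x₀,x_δ)`: infimum of the action over curves joining the endpoints. -/
def GammaInf (lam : ℝ) (f : H → EReal) (δ : ℝ) (x0 xδ : H) : ℝ≥0∞ :=
  ⨅ (γ : ℝ → H) (_ : γ 0 = x0 ∧ γ δ = xδ), actionFn lam f 0 δ γ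

/-- Mosco convergence of `fh` to `f`: recovery sequences for the strong topology, and the
`liminf` inequality along weakly convergent sequences. -/
def Mosco (fh : ℕ → H → EReal) (f : H → EReal) : Prop :=
  (∀ x : H, ∃ xh : ℕ → H, Tendsto xh atTop (𝓝 x) ∧
      Filter.limsup (fun h => fh h (xh h)) atTop ≤ f x) ∧
  (∀ (xh : ℕ → H) (x : H),
      (∀ p : H, Tendsto (fun h => ⟪xh h, p⟫) atTop (𝓝 ⟪x, p⟫)) →
      f x ≤ Filter.liminf (fun h => fh h (xh h)) atTop)

/-! Pick `R` strictly between the `liminf` of the slopes and `|∇f|(x)`. Along a filter on which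
`|∇f_h|(x_h) < R`, the minimal subgradients `q_h ∈ ∂f_h(x_h)` have norm at most `R`, so by
Banach–Alaoglu they cluster weakly at some `p` with `‖p‖ ≤ R`. Testing the subgradient
inequality of `q_h` against a recovery sequence `y_h → y` and passing to the limit with the
`liminf` inequality at `x` gives `p ∈ ∂f(x)`: weak convergence of `q_h` paired with strong
convergence of `y_h - x_h` suffices. Hence `|∇f|(x) ≤ ‖p‖ ≤ R`, a contradiction. -/

theorem EReal.add_le_of_eventually_add_le {ι : Type*} {l G : Filter ι} [G.NeBot] (hGl : G ≤ l)
    {a b : ι → EReal} {c : ι → ℝ} {A B : EReal} {c₀ : ℝ}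
    (hA : A ≤ liminf a l) (hB : limsup b l ≤ B) (hc : Tendsto c G (𝓝 c₀))
    (hab : ∀ᶠ i in G, a i + c i ≤ b i) : A + c₀ ≤ B :=
  calc A + c₀ ≤ liminf a G + liminf (fun i => (c i : EReal)) G :=
        add_le_add (hA.trans (liminf_le_liminf_of_le hGl))
          (EReal.tendsto_coe.2 hc).liminf_eq.ge
    _ ≤ liminf (fun i => a i + c i) G := EReal.le_liminf_add
    _ ≤ liminf b G := liminf_le_liminf hab
    _ ≤ limsup b G := liminf_le_limsup
    _ ≤ limsup b l := limsup_le_limsup_of_le hGl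
    _ ≤ B := hB

theorem tendsto_inner_of_weak_of_norm_le {E ι : Type*} [NormedAddCommGroup E]
    [InnerProductSpace ℝ E] {G : Filter ι} {q w : ι → E} {p w₀ : E} {R : ℝ}
    (hqp : ∀ v, Tendsto (fun i => ⟪q i, v⟫) G (𝓝 ⟪p, v⟫)) (hR : ∀ᶠ i in G, ‖q i‖ ≤ R)
    (hw : Tendsto w G (𝓝 w₀)) : Tendsto (fun i => ⟪q i, w i⟫) G (𝓝 ⟪p, w₀⟫) := by
  have hrest : Tendsto (fun i => ⟪q i, w i - w₀⟫) G (𝓝 0) := by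
    refine squeeze_zero_norm' ?_ (by simpa using (hw.sub_const w₀).norm.const_mul R)
    filter_upwards [hR] with i hi
    exact (norm_inner_le_norm _ _).trans (mul_le_mul_of_nonneg_right hi (norm_nonneg _))
  simpa [← inner_add_right] using (hqp w₀).add hrest

theorem exists_ultrafilter_tendsto_inner {ι : Type*} (G : Filter ι) [G.NeBot] {q : ι → H}
    {R : ℝ} (hR : ∀ᶠ i in G, ‖q i‖ ≤ R) :
    ∃ U : Ultrafilter ι, ↑U ≤ G ∧
      ∃ p : H, ‖p‖ ≤ R ∧ ∀ v, Tendsto (fun i => ⟪q i, v⟫) U (𝓝 ⟪p, v⟫) := by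
  let Φ : ι → WeakDual ℝ H := fun i =>
    StrongDual.toWeakDual (InnerProductSpace.toDual ℝ H (q i))
  let U := Ultrafilter.of G
  have hball : (U.map Φ : Filter (WeakDual ℝ H)) ≤
      𝓟 (WeakDual.toStrongDual ⁻¹' Metric.closedBall 0 R) := by
    refine le_principal_iff.2 (Ultrafilter.of_le G (hR.mono fun i hi => ?_))
    simpa [Φ] using hi
  obtain ⟨φ, hφR, hUφ⟩ := (WeakDual.isCompact_closedBall 0 R).ultrafilter_le_nhds _ hball
  refine ⟨U, Ultrafilter.of_le G, (InnerProductSpace.toDual ℝ H).symm (WeakDual.toStrongDual φ),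
    by simpa using hφR, fun v => ?_⟩
  have := ((WeakDual.eval_continuous v).tendsto φ).comp hUφ
  simpa [Φ, Function.comp_def, InnerProductSpace.toDual_symm_apply] using this

theorem exists_mem_forall_norm_le {K : Set H} (hK : Convex ℝ K) (hc : IsClosed K)
    (hne : K.Nonempty) : ∃ v ∈ K, ∀ w ∈ K, ‖v‖ ≤ ‖w‖ := by
  obtain ⟨v, hv, hmin⟩ := exists_norm_eq_iInf_of_complete_convex hne hc.isComplete hK 0
  refine ⟨v, hv, fun w hw => ?_⟩
  have hbdd : BddBelow (range fun u : K => ‖(0 : H) - u‖) :=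
    ⟨0, forall_mem_range.2 fun _ => norm_nonneg _⟩
  have hle := ciInf_le hbdd ⟨w, hw⟩
  rw [← hmin] at hle
  simpa using hle

section Subdifferential

variable {E : Type*} [NormedAddCommGroup E] [InnerProductSpace ℝ E] {lam : ℝ} {f : E → EReal}
  {x : E}

theorem subdiff_eq_iInter {a : ℝ} (ha : f x = a) :
    subdiff lam f x = ⋂ y, innerSL ℝ (y - x) ⁻¹'
      {r : ℝ | ((a + (r + lam / 2 * ‖y - x‖ ^ 2) : ℝ) : EReal) ≤ f y} := by
  ext p
  simp only [subdiff, ha, mem_iInter, mem_preimage, innerSL_apply_apply,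
    EReal.coe_add, real_inner_comm p, ne_eq, EReal.coe_ne_top, not_false_eq_true, true_and]
  rfl

theorem isClosed_subdiff_of_ne_bot (hx : f x ≠ ⊥) : IsClosed (subdiff lam f x) := by
  by_cases htop : f x = ⊤
  · simp [subdiff, htop]
  rw [subdiff_eq_iInter (EReal.coe_toReal htop hx).symm]
  exact isClosed_iInter fun y =>
    (isClosed_le (continuous_coe_real_ereal.comp (by fun_prop)) continuous_const).preimage
      (innerSL ℝ (y - x)).continuous

theorem convex_subdiff_of_ne_bot (hx : f x ≠ ⊥) : Convex ℝ (subdiff lam f x) := by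
  by_cases htop : f x = ⊤
  · simp [subdiff, htop, convex_empty]
  rw [subdiff_eq_iInter (EReal.coe_toReal htop hx).symm]
  refine convex_iInter fun y => (IsLowerSet.ordConnected ?_).convex.linear_preimage _
  intro r s hsr hr
  exact le_trans (EReal.coe_le_coe_iff.2 (by linarith)) hr

theorem mem_subdiff_of_tendsto_inner {ι : Type*} {l G : Filter ι} [G.NeBot] (hGl : G ≤ l)
    {fh : ι → E → EReal} (hdom : ∃ y, f y ≠ ⊤)
    (hlimsup : ∀ y : E, ∃ yh : ι → E, Tendsto yh l (𝓝 y) ∧ limsup (fun i => fh i (yh i)) l ≤ f y)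
    {xh : ι → E} (hx : Tendsto xh l (𝓝 x)) (hliminf : f x ≤ liminf (fun i => fh i (xh i)) l)
    {q : ι → E} {p : E} {R : ℝ} (hq : ∀ᶠ i in G, q i ∈ subdiff lam (fh i) (xh i))
    (hR : ∀ᶠ i in G, ‖q i‖ ≤ R) (hqp : ∀ v, Tendsto (fun i => ⟪q i, v⟫) G (𝓝 ⟪p, v⟫)) :
    p ∈ subdiff lam f x := by
  have hineq : ∀ y, f x + ((⟪p, y - x⟫ + lam / 2 * ‖y - x‖ ^ 2 : ℝ) : EReal) ≤ f y := by
    intro y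
    obtain ⟨yh, hyh, hls⟩ := hlimsup y
    have hw : Tendsto (fun i => yh i - xh i) G (𝓝 (y - x)) := (hyh.sub hx).mono_left hGl
    refine EReal.add_le_of_eventually_add_le hGl hliminf hls
      ((tendsto_inner_of_weak_of_norm_le hqp hR hw).add ((hw.norm.pow 2).const_mul _)) ?_
    filter_upwards [hq] with i hi using hi.2 (yh i)
  obtain ⟨y₀, hy₀⟩ := hdom
  refine ⟨fun htop => hy₀ ?_, hineq⟩
  simpa [htop, ← EReal.coe_add, EReal.top_add_coe] using hineq y₀

end Subdifferential

section MinimalSubgradient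

variable {lam : ℝ} {f : H → EReal} {x : H}

theorem gradMin_spec (hx : f x ≠ ⊥) (hne : (subdiff lam f x).Nonempty) :
    gradMin lam f x ∈ subdiff lam f x ∧ ∀ q ∈ subdiff lam f x, ‖gradMin lam f x‖ ≤ ‖q‖ := by
  have hmin := exists_mem_forall_norm_le (convex_subdiff_of_ne_bot hx)
    (isClosed_subdiff_of_ne_bot hx) hne
  rw [gradMin, dif_pos hmin]
  exact hmin.choose_spec

theorem gradNorm_le_of_mem_subdiff (hx : f x ≠ ⊥) {p : H} (hp : p ∈ subdiff lam f x) :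
    gradNorm lam f x ≤ ENNReal.ofReal ‖p‖ := by
  rw [gradNorm, if_pos ⟨p, hp⟩]
  exact ENNReal.ofReal_le_ofReal ((gradMin_spec hx ⟨p, hp⟩).2 p hp)

theorem gradMin_mem_subdiff_of_gradNorm_lt (hx : f x ≠ ⊥) {R : ℝ}
    (hR : gradNorm lam f x < ENNReal.ofReal R) :
    gradMin lam f x ∈ subdiff lam f x ∧ ‖gradMin lam f x‖ ≤ R := by
  have hne : (subdiff lam f x).Nonempty := by
    by_contra hempty
    simp [gradNorm, hempty] at hR
  rw [gradNorm, if_pos hne] at hR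
  exact ⟨(gradMin_spec hx hne).1, (ENNReal.ofReal_lt_ofReal_iff'.1 hR).1.le⟩

end MinimalSubgradient

theorem statement3_general (lam : ℝ) (fh : ℕ → H → EReal) (f : H → EReal)
    (hfh_proper : ∀ h, ProperFn (fh h))
    (hf_proper : ProperFn f)
    (hlimsup : ∀ x : H, ∃ yh : ℕ → H, Tendsto yh atTop (𝓝 x) ∧
      Filter.limsup (fun h => fh h (yh h)) atTop ≤ f x)
    (hliminf : ∀ (x : H) (xh : ℕ → H), Tendsto xh atTop (𝓝 x) →
      f x ≤ Filter.liminf (fun h => fh h (xh h)) atTop)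
    (x : H) (xh : ℕ → H) (hx : Tendsto xh atTop (𝓝 x)) :
    gradNorm lam f x ≤ Filter.liminf (fun h => gradNorm lam (fh h) (xh h)) atTop := by
  by_contra! hlt
  obtain ⟨R, -, hliminfR, hRf⟩ := ENNReal.lt_iff_exists_real_btwn.1 hlt
  let G := atTop ⊓ 𝓟 {h | gradNorm lam (fh h) (xh h) < ENNReal.ofReal R}
  have : G.NeBot := frequently_iff_neBot.1 (frequently_lt_of_liminf_lt (h := hliminfR))
  have hslope : ∀ᶠ h in G, gradNorm lam (fh h) (xh h) < ENNReal.ofReal R :=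
    mem_inf_of_right (mem_principal_self _)
  have hq : ∀ᶠ h in G, gradMin lam (fh h) (xh h) ∈ subdiff lam (fh h) (xh h) ∧
      ‖gradMin lam (fh h) (xh h)‖ ≤ R :=
    hslope.mono fun h hh => gradMin_mem_subdiff_of_gradNorm_lt ((hfh_proper h).2 (xh h)) hh
  obtain ⟨U, hUG, p, hpR, hqp⟩ := exists_ultrafilter_tendsto_inner G (hq.mono fun _ => And.right)
  have hp : p ∈ subdiff lam f x :=
    mem_subdiff_of_tendsto_inner (hUG.trans inf_le_left) hf_proper.1 hlimsup hx (hliminf x xh hx)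
      (hUG (hq.mono fun _ => And.left)) (hUG (hq.mono fun _ => And.right)) hqp
  exact hRf.not_ge ((gradNorm_le_of_mem_subdiff (hf_proper.2 x) hp).trans
    (ENNReal.ofReal_le_ofReal hpR))

/-- liminf inequality for the metric slopes. -/
theorem statement3 (lam : ℝ) (fh : ℕ → H → EReal) (f : H → EReal)
    (hfh_proper : ∀ h, ProperFn (fh h)) (hfh_conv : ∀ h, LambdaConvex lam (fh h))
    (hfh_lsc : ∀ h, LowerSemicontinuous (fh h))
    (hf_proper : ProperFn f) (hf_conv : LambdaConvex lam f) (hf_lsc : LowerSemicontinuous f)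
    (hlimsup : ∀ x : H, ∃ yh : ℕ → H, Tendsto yh atTop (𝓝 x) ∧
      Filter.limsup (fun h => fh h (yh h)) atTop ≤ f x)
    (hliminf : ∀ (x : H) (xh : ℕ → H), Tendsto xh atTop (𝓝 x) →
      f x ≤ Filter.liminf (fun h => fh h (xh h)) atTop)
    (x : H) (xh : ℕ → H) (hx : Tendsto xh atTop (𝓝 x)) :
    gradNorm lam f x ≤ Filter.liminf (fun h => gradNorm lam (fh h) (xh h)) atTop :=
  statement3_general lam fh f hfh_proper hf_proper hlimsup hliminf x xh hx

end
end

section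
/- Let H be a real Hilbert space, λ ∈ ℝ, and let f : H → (-∞,∞] be proper, λ-convex and lower semicontinuous. Let τ > 0 be admissible, i.e. τ < −1/λ if λ < 0. Then the Moreau–Yosida regularization f_τ is (Fréchet) differentiable at every point of H, and for all x ∈ H one has ∇f_τ(x) = (x − J_τ(x))/τ, and this vector belongs to ∂f(J_τ(x)). -/
/-!
For fixed `x`, the objective `y ↦ f y + ‖y - x‖² / (2τ)` is `(λ + 1/τ)`-convex with
`λ + 1/τ > 0`; a lower semicontinuous strongly convex function on a Banach space is bounded below
and its minimizing sequences are Cauchy, so the resolvent `J_τ x` is a genuine minimizer.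
Strong convexity at the minimizer is exactly the statement `(x - J_τ x)/τ ∈ ∂f(J_τ x)`, and
monotonicity of `∂f` makes `J_τ` Lipschitz with constant `1/(1 + τλ)`.
Using `J_τ x` as a competitor in the problem defining `f_τ y` gives
`f_τ y ≤ f_τ x + ⟪p x, y - x⟫ + ‖y - x‖²/(2τ)` with `p x = (x - J_τ x)/τ`; exchanging `x` and `y`
and using that `p` is Lipschitz gives the reverse inequality up to `O(‖y - x‖²)`, so `p x` is
the gradient of `f_τ` at `x`.
-/

open Filter Topology MeasureTheory Set
open scoped ENNReal RealInnerProductSpace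

noncomputable section

attribute [local instance] Classical.propDecidable

variable {H : Type*} [NormedAddCommGroup H] [InnerProductSpace ℝ H] [CompleteSpace H]

section Epigraph

variable {E : Type*} [NormedAddCommGroup E] [NormedSpace ℝ E] {μ : ℝ} {Φ : E → EReal}

/-- `μ`-convexity tested on points `(a, r)`, `(b, s)` of the epigraph, so that only real
arithmetic is involved. -/
def LambdaConvexEpigraph (μ : ℝ) (Φ : E → EReal) : Prop :=
  ∀ a b : E, ∀ r s t : ℝ, 0 ≤ t → t ≤ 1 → Φ a ≤ r → Φ b ≤ s →
    Φ ((1 - t) • a + t • b)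
      ≤ (((1 - t) * r + t * s - μ / 2 * (t * (1 - t)) * ‖a - b‖ ^ 2 : ℝ) : EReal)

/-- Lower semicontinuity at one point of the domain bounds `Φ` below near it, and the quadratic
growth along rays from that point propagates the bound to all of `E`. -/
theorem LambdaConvexEpigraph.exists_coe_le (hμ : 0 < μ) (hΦ : LambdaConvexEpigraph μ Φ)
    (hlsc : LowerSemicontinuous Φ) {y₀ : E} {m₀ : ℝ} (hy₀ : Φ y₀ = m₀) :
    ∃ B : ℝ, ∀ y, (B : EReal) ≤ Φ y := by
  obtain ⟨ε, hε, hball⟩ : ∃ ε > 0, ∀ ⦃y⦄, dist y y₀ < ε → ((m₀ - 1 : ℝ) : EReal) < Φ y :=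
    Metric.eventually_nhds_iff.1 <|
      hlsc y₀ _ (show _ < Φ y₀ by rw [hy₀]; exact_mod_cast sub_one_lt m₀)
  refine ⟨m₀ - 1 - 4 / (μ * ε ^ 2), fun y => ?_⟩
  suffices h : ∀ s : ℝ, Φ y ≤ s → m₀ - 1 - 4 / (μ * ε ^ 2) ≤ s by
    by_contra! hlt
    obtain ⟨s, hs, hsB⟩ := EReal.lt_iff_exists_real_btwn.1 hlt
    exact (EReal.coe_lt_coe_iff.1 hsB).not_ge (h s hs.le)
  intro s hs
  have hB : 0 ≤ 4 / (μ * ε ^ 2) := by positivity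
  set d := ‖y - y₀‖
  rcases lt_or_ge d ε with hd | hd
  · have := EReal.coe_lt_coe_iff.1 ((hball (by rwa [dist_eq_norm])).trans_le hs)
    linarith
  set t := ε / (2 * d)
  have hd₀ : 0 < d := hε.trans_le hd
  have ht₀ : 0 < t := by positivity
  have ht₁ : t ≤ 1 / 2 := by rw [div_le_iff₀ (by positivity)]; linarith
  have htd : t * d = ε / 2 := by simp only [t]; field_simp
  have hz : dist ((1 - t) • y₀ + t • y) y₀ < ε := by
    rw [dist_eq_norm, show (1 - t) • y₀ + t • y - y₀ = t • (y - y₀) by module, norm_smul,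
      Real.norm_eq_abs, abs_of_pos ht₀, htd]
    linarith
  have hlt := EReal.coe_lt_coe_iff.1 <|
    (hball hz).trans_le (hΦ y₀ y m₀ s t ht₀.le (by linarith) hy₀.le hs)
  rw [norm_sub_rev] at hlt
  -- `t (s - m₀) > -1 + μ t d² / 4`; multiplying by `1 / t = 2 d / ε` and completing the square
  -- in `d` gives the bound.
  have h₁ : -1 + μ / 4 * t * d ^ 2 < t * (s - m₀) := by
    nlinarith [mul_nonneg (mul_nonneg (mul_nonneg hμ.le ht₀.le) (sq_nonneg d))
      (by linarith : (0 : ℝ) ≤ 1 / 2 - t)]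
  have h₂ : -(2 * d / ε) + μ / 4 * d ^ 2 < s - m₀ := by
    have := mul_lt_mul_of_pos_left h₁ (by positivity : 0 < 2 * d / ε)
    have ht : 2 * d / ε * t = 1 := by
      rw [div_mul_eq_mul_div, mul_assoc, mul_comm d t, htd]; field_simp
    nlinarith
  have h₃ : -(4 / (μ * ε ^ 2)) ≤ -(2 * d / ε) + μ / 4 * d ^ 2 := by
    have : 0 ≤ (μ * d / 2 - 2 / ε) ^ 2 / μ := by positivity
    have e : (μ * d / 2 - 2 / ε) ^ 2 / μ = -(2 * d / ε) + μ / 4 * d ^ 2 + 4 / (μ * ε ^ 2) := by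
      field_simp; ring
    linarith
  linarith

/-- The midpoint inequality makes every minimizing sequence Cauchy; its limit is a minimizer
because sublevel sets are closed. -/
theorem LambdaConvexEpigraph.exists_forall_le [CompleteSpace E] (hμ : 0 < μ)
    (hΦ : LambdaConvexEpigraph μ Φ) (hlsc : LowerSemicontinuous Φ) {y₀ : E} {m₀ : ℝ}
    (hy₀ : Φ y₀ = m₀) : ∃ y, ∀ z, Φ y ≤ Φ z := by
  obtain ⟨B, hB⟩ := hΦ.exists_coe_le hμ hlsc hy₀
  obtain ⟨m, hm⟩ : ∃ m : ℝ, ⨅ y, Φ y = m :=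
    ⟨_, (EReal.coe_toReal (ne_top_of_le_ne_top (hy₀ ▸ EReal.coe_ne_top m₀) (iInf_le _ y₀))
      (ne_bot_of_le_ne_bot (EReal.coe_ne_bot B) (le_iInf hB))).symm⟩
  have hm_le (z : E) : (m : EReal) ≤ Φ z := hm ▸ iInf_le _ z
  have hseq (n : ℕ) : ∃ y, Φ y ≤ ((m + 1 / (n + 1) : ℝ) : EReal) := by
    obtain ⟨y, hy⟩ := iInf_lt_iff.1 <| hm ▸
      (EReal.coe_lt_coe_iff.2 (lt_add_of_pos_right m (by positivity)) :
        (m : EReal) < ((m + 1 / (n + 1) : ℝ) : EReal))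
    exact ⟨y, hy.le⟩
  choose ys hys using hseq
  have hdist (n k N : ℕ) (hn : N ≤ n) (hk : N ≤ k) :
      dist (ys n) (ys k) ≤ √(8 / μ * (1 / (N + 1))) := by
    have hmid := EReal.coe_le_coe_iff.1 <| (hm_le _).trans <|
      hΦ (ys n) (ys k) _ _ (1 / 2) (by norm_num) (by norm_num) (hys n) (hys k)
    have hn' : (1 : ℝ) / (n + 1) ≤ 1 / (N + 1) := by gcongr
    have hk' : (1 : ℝ) / (k + 1) ≤ 1 / (N + 1) := by gcongr
    rw [dist_eq_norm, Real.le_sqrt (norm_nonneg _) (by positivity), div_mul_eq_mul_div,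
      le_div_iff₀ hμ]
    linarith
  have hcauchy : CauchySeq ys := by
    refine cauchySeq_of_le_tendsto_0 _ hdist ?_
    simpa using ((tendsto_one_div_add_atTop_nhds_zero_nat (𝕜 := ℝ)).const_mul (8 / μ)).sqrt
  obtain ⟨y, hy⟩ := cauchySeq_tendsto_of_complete hcauchy
  refine ⟨y, fun z => le_trans ?_ (hm_le z)⟩
  have hle (N : ℕ) : Φ y ≤ ((m + 1 / (N + 1) : ℝ) : EReal) :=
    (hlsc.isClosed_preimage _).mem_of_tendsto hy <| eventually_atTop.2
      ⟨N, fun n hn => (hys n).trans (EReal.coe_le_coe_iff.2 (by gcongr))⟩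
  have hlim : Tendsto (fun N : ℕ => ((m + 1 / (N + 1) : ℝ) : EReal)) atTop (𝓝 m) :=
    EReal.tendsto_coe.2 <| by
      simpa using (tendsto_one_div_add_atTop_nhds_zero_nat (𝕜 := ℝ)).const_add m
  exact ge_of_tendsto' hlim hle

theorem LambdaConvexEpigraph.coe_add_le_of_forall_le (hΦ : LambdaConvexEpigraph μ Φ) {J : E}
    {a : ℝ} (hJa : Φ J = a) (hJ : ∀ z, Φ J ≤ Φ z) (y : E) :
    ((a + μ / 2 * ‖y - J‖ ^ 2 : ℝ) : EReal) ≤ Φ y := by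
  by_cases htop : Φ y = ⊤
  · simp [htop]
  have hb : Φ y = (Φ y).toReal :=
    (EReal.coe_toReal htop (ne_bot_of_le_ne_bot (hJa ▸ EReal.coe_ne_bot a) (hJ y))).symm
  rw [hb, EReal.coe_le_coe_iff]
  have key : ∀ t ∈ Ioc (0 : ℝ) 1, a + μ / 2 * (1 - t) * ‖y - J‖ ^ 2 ≤ (Φ y).toReal := by
    rintro t ⟨ht₀, ht₁⟩
    have h := (hJ _).trans (hΦ J y a _ t ht₀.le ht₁ hJa.le hb.le)
    rw [hJa, EReal.coe_le_coe_iff, norm_sub_rev J y] at h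
    refine le_of_mul_le_mul_left ?_ ht₀
    linarith
  have hlim : Tendsto (fun t : ℝ => a + μ / 2 * (1 - t) * ‖y - J‖ ^ 2) (𝓝[>] 0)
      (𝓝 (a + μ / 2 * ‖y - J‖ ^ 2)) := by
    have := ((by fun_prop : Continuous fun t : ℝ => a + μ / 2 * (1 - t) * ‖y - J‖ ^ 2).tendsto 0)
    simpa using this.mono_left nhdsWithin_le_nhds
  exact le_of_tendsto hlim (eventually_of_mem (Ioc_mem_nhdsGT one_pos) key)

end Epigraph

section InnerProduct

variable {E : Type*} [NormedAddCommGroup E] [InnerProductSpace ℝ E] {lam τ : ℝ} {f : E → EReal}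

theorem LambdaConvex.lambdaConvexEpigraph (hf : LambdaConvex lam f) :
    LambdaConvexEpigraph lam f := by
  intro a b r s t ht₀ ht₁ ha hb
  have h₁ : ((1 - t : ℝ) : EReal) * f a ≤ ((1 - t : ℝ) : EReal) * r :=
    mul_le_mul_of_nonneg_left ha (EReal.coe_nonneg.2 (by linarith))
  have h₂ : ((t : ℝ) : EReal) * f b ≤ (t : EReal) * s :=
    mul_le_mul_of_nonneg_left hb (EReal.coe_nonneg.2 ht₀)
  calc f ((1 - t) • a + t • b)
      ≤ ((1 - t : ℝ) : EReal) * f a + ((t : ℝ) : EReal) * f b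
        - ((lam / 2 * (t * (1 - t)) * ‖a - b‖ ^ 2 : ℝ) : EReal) := hf a b t ht₀ ht₁
    _ ≤ ((1 - t : ℝ) : EReal) * r + (t : EReal) * s
        - ((lam / 2 * (t * (1 - t)) * ‖a - b‖ ^ 2 : ℝ) : EReal) :=
      EReal.sub_le_sub (add_le_add h₁ h₂) le_rfl
    _ = _ := by norm_cast

theorem norm_smul_add_smul_sub_sq (a b x : E) (t : ℝ) :
    ‖(1 - t) • a + t • b - x‖ ^ 2
      = (1 - t) * ‖a - x‖ ^ 2 + t * ‖b - x‖ ^ 2 - t * (1 - t) * ‖a - b‖ ^ 2 := by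
  have h₁ : (1 - t) • a + t • b - x = (a - x) + t • (b - a) := by module
  have h₂ : b - x = (a - x) + (b - a) := by abel
  rw [h₁, h₂, norm_sub_rev a b, norm_add_sq_real, norm_add_sq_real, real_inner_smul_right,
    norm_smul, Real.norm_eq_abs, mul_pow, sq_abs]
  ring

def proxObjective (f : E → EReal) (τ : ℝ) (x y : E) : EReal :=
  f y + ((‖y - x‖ ^ 2 / (2 * τ) : ℝ) : EReal)

theorem lambdaConvexEpigraph_proxObjective (hf : LambdaConvexEpigraph lam f) (τ : ℝ) (x : E) :
    LambdaConvexEpigraph (lam + τ⁻¹) (proxObjective f τ x) := by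
  intro a b r s t ht₀ ht₁ ha hb
  have hq (y : E) (r : ℝ) (h : proxObjective f τ x y ≤ r) :
      f y ≤ ((r - ‖y - x‖ ^ 2 / (2 * τ) : ℝ) : EReal) := by
    rwa [EReal.coe_sub,
      EReal.le_sub_iff_add_le (.inl (EReal.coe_ne_bot _)) (.inl (EReal.coe_ne_top _))]
  refine (add_le_add_left (hf a b _ _ t ht₀ ht₁ (hq a r ha) (hq b s hb)) _).trans_eq ?_
  rw [← EReal.coe_add, norm_smul_add_smul_sub_sq]
  congr 1
  ring

theorem lam_mul_sq_le_inner_of_mem_subdiff {a b p q : E} (ha : f a ≠ ⊥)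
    (hp : p ∈ subdiff lam f a) (hq : q ∈ subdiff lam f b) :
    lam * ‖a - b‖ ^ 2 ≤ ⟪p - q, a - b⟫ := by
  have hab := hp.2 b
  have hb : f b ≠ ⊥ := ne_bot_of_le_ne_bot (EReal.add_ne_bot_iff.2 ⟨ha, EReal.coe_ne_bot _⟩) hab
  have hba := hq.2 a
  rw [← EReal.coe_toReal hp.1 ha, ← EReal.coe_toReal hq.1 hb, ← EReal.coe_add,
    EReal.coe_le_coe_iff] at hab hba
  rw [norm_sub_rev] at hab
  have e₁ : ⟪p, b - a⟫ = -⟪p, a - b⟫ := by rw [← inner_neg_right, neg_sub]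
  rw [inner_sub_left]
  linarith

theorem inv_smul_sub_mem_subdiff (hconv : LambdaConvex lam f) {x J : E} {a : ℝ}
    (hJa : proxObjective f τ x J = a) (hJ : ∀ z, proxObjective f τ x J ≤ proxObjective f τ x z) :
    τ⁻¹ • (x - J) ∈ subdiff lam f J := by
  have hfJ : f J = ((a - ‖J - x‖ ^ 2 / (2 * τ) : ℝ) : EReal) := by
    rw [EReal.coe_sub, ← hJa, proxObjective, EReal.add_sub_cancel_right]
  refine ⟨hfJ ▸ EReal.coe_ne_top _, fun y => ?_⟩
  have h := (lambdaConvexEpigraph_proxObjective hconv.lambdaConvexEpigraph τ x)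
    |>.coe_add_le_of_forall_le hJa hJ y
  rw [proxObjective] at h
  rw [← (EReal.addLECancellable_coe (‖y - x‖ ^ 2 / (2 * τ))).add_le_add_iff_right, hfJ,
    ← EReal.coe_add, ← EReal.coe_add]
  refine h.trans_eq' (congrArg _ ?_)
  rw [show y - x = (y - J) + (J - x) by abel, norm_add_sq_real, real_inner_smul_left,
    ← neg_sub J x, inner_neg_left, real_inner_comm]
  ring

end InnerProduct

section Resolvent

variable {E : Type*} [NormedAddCommGroup E] {τ : ℝ} {f : E → EReal}

theorem proxObjective_Jres_le {x : E} (h : ∃ y, ∀ z, proxObjective f τ x y ≤ proxObjective f τ x z)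
    (z : E) : proxObjective f τ x (Jres f τ x) ≤ proxObjective f τ x z := by
  have h' : ∃ y, ∀ z, f y + ((‖y - x‖ ^ 2 / (2 * τ) : ℝ) : EReal)
      ≤ f z + ((‖z - x‖ ^ 2 / (2 * τ) : ℝ) : EReal) := h
  rw [Jres, dif_pos h']
  exact h.choose_spec z

theorem proxObjective_Jres_eq_moreau (hf : ProperFn f) {x : E}
    (hJ : ∀ z, proxObjective f τ x (Jres f τ x) ≤ proxObjective f τ x z) :
    proxObjective f τ x (Jres f τ x) = moreau f τ x := by
  obtain ⟨⟨x₀, hx₀⟩, hbot⟩ := hf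
  have hq {y : EReal} (r : ℝ) : y + (r : EReal) ≠ ⊤ ↔ y ≠ ⊤ :=
    EReal.add_ne_top_iff_ne_top_left (EReal.coe_ne_bot r) (EReal.coe_ne_top r)
  have htop : f (Jres f τ x) ≠ ⊤ :=
    (hq _).1 ((hJ x₀).trans_lt (lt_top_iff_ne_top.2 ((hq _).2 hx₀))).ne
  rw [moreau, EReal.coe_add, EReal.coe_toReal htop (hbot _)]
  rfl

end Resolvent

section Regularization

variable {E : Type*} [NormedAddCommGroup E] [InnerProductSpace ℝ E] {lam τ : ℝ} {f : E → EReal}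

theorem exists_forall_proxObjective_le [CompleteSpace E] (hf : ProperFn f)
    (hconv : LambdaConvex lam f) (hlsc : LowerSemicontinuous f) (hμ : 0 < lam + τ⁻¹) (x : E) :
    ∃ y, ∀ z, proxObjective f τ x y ≤ proxObjective f τ x z := by
  obtain ⟨⟨x₀, hx₀⟩, hbot⟩ := hf
  have hlsc' : LowerSemicontinuous (proxObjective f τ x) :=
    hlsc.add' (EReal.continuous_coe_iff.2 (by fun_prop)).lowerSemicontinuous fun _ =>
      EReal.continuousAt_add (.inr (EReal.coe_ne_bot _)) (.inr (EReal.coe_ne_top _))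
  refine (lambdaConvexEpigraph_proxObjective hconv.lambdaConvexEpigraph τ x).exists_forall_le
    hμ hlsc' (y₀ := x₀) (m₀ := (f x₀).toReal + ‖x₀ - x‖ ^ 2 / (2 * τ)) ?_
  rw [proxObjective, EReal.coe_add, EReal.coe_toReal hx₀ (hbot x₀)]

theorem inv_smul_sub_Jres_mem_subdiff (hf : ProperFn f) (hconv : LambdaConvex lam f) {x : E}
    (hJ : ∀ z, proxObjective f τ x (Jres f τ x) ≤ proxObjective f τ x z) :
    τ⁻¹ • (x - Jres f τ x) ∈ subdiff lam f (Jres f τ x) :=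
  inv_smul_sub_mem_subdiff hconv (proxObjective_Jres_eq_moreau hf hJ) hJ

theorem norm_Jres_sub_Jres_le (hf : ProperFn f) (hconv : LambdaConvex lam f) (hτ : 0 < τ)
    (hκ : 0 < 1 + τ * lam)
    (hJ : ∀ x z, proxObjective f τ x (Jres f τ x) ≤ proxObjective f τ x z) (x y : E) :
    ‖Jres f τ y - Jres f τ x‖ ≤ ‖y - x‖ / (1 + τ * lam) := by
  have hmono := lam_mul_sq_le_inner_of_mem_subdiff (hf.2 _)
    (inv_smul_sub_Jres_mem_subdiff hf hconv (hJ y)) (inv_smul_sub_Jres_mem_subdiff hf hconv (hJ x))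
  rw [← smul_sub, real_inner_smul_left, show y - Jres f τ y - (x - Jres f τ x)
    = (y - x) - (Jres f τ y - Jres f τ x) by abel, inner_sub_left, real_inner_self_eq_norm_sq]
    at hmono
  set d := Jres f τ y - Jres f τ x
  have hcoercive : (1 + τ * lam) * ‖d‖ ^ 2 ≤ ‖y - x‖ * ‖d‖ := by
    have h : τ * (lam * ‖d‖ ^ 2) ≤ ⟪y - x, d⟫ - ‖d‖ ^ 2 := by
      calc τ * (lam * ‖d‖ ^ 2) ≤ τ * (τ⁻¹ * (⟪y - x, d⟫ - ‖d‖ ^ 2)) :=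
            mul_le_mul_of_nonneg_left hmono hτ.le
        _ = ⟪y - x, d⟫ - ‖d‖ ^ 2 := by field_simp
    linarith [real_inner_le_norm (y - x) d]
  rw [le_div_iff₀ hκ]
  rcases (norm_nonneg d).eq_or_lt with hd | hd
  · rw [← hd]
    simp
  · nlinarith

theorem moreau_le_add_inner (hf : ProperFn f)
    (hJ : ∀ x z, proxObjective f τ x (Jres f τ x) ≤ proxObjective f τ x z) (x y : E) :
    moreau f τ y ≤ moreau f τ x + ⟪τ⁻¹ • (x - Jres f τ x), y - x⟫ + (2 * τ)⁻¹ * ‖y - x‖ ^ 2 := by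
  set Jx := Jres f τ x
  have hshift : proxObjective f τ y Jx = proxObjective f τ x Jx
      + ((‖Jx - y‖ ^ 2 / (2 * τ) - ‖Jx - x‖ ^ 2 / (2 * τ) : ℝ) : EReal) := by
    rw [proxObjective, proxObjective, add_assoc, ← EReal.coe_add, add_sub_cancel]
  have h := hJ y Jx
  rw [hshift, proxObjective_Jres_eq_moreau hf (hJ x), proxObjective_Jres_eq_moreau hf (hJ y),
    ← EReal.coe_add, EReal.coe_le_coe_iff] at h
  refine h.trans_eq ?_
  rw [show Jx - y = -((x - Jx) + (y - x)) by abel, norm_neg, norm_add_sq_real, norm_sub_rev Jx x,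
    real_inner_smul_left]
  ring

end Regularization

theorem hasGradientAt_of_le_inner_add_sq {E : Type*} [NormedAddCommGroup E]
    [InnerProductSpace ℝ E] [CompleteSpace E] {g : E → ℝ} {G : E → E} {c L : ℝ} {x : E}
    (hg : ∀ x y, g y ≤ g x + ⟪G x, y - x⟫ + c * ‖y - x‖ ^ 2)
    (hG : ∀ y, ‖G y - G x‖ ≤ L * ‖y - x‖) : HasGradientAt g (G x) x := by
  rw [hasGradientAt_iff_isLittleO]
  have hsq : (fun y => ‖y - x‖ ^ 2) =o[𝓝 x] fun y => y - x :=
    (Asymptotics.isLittleO_norm_pow_id one_lt_two).comp_tendsto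
      (tendsto_sub_nhds_zero_iff.2 tendsto_id)
  refine Asymptotics.IsBigO.trans_isLittleO ?_ hsq
  refine Asymptotics.IsBigO.of_bound (|L| + |c|) (Eventually.of_forall fun y => ?_)
  rw [Real.norm_eq_abs, Real.norm_eq_abs, abs_of_nonneg (sq_nonneg ‖y - x‖), abs_le]
  have hlo := hg y x
  rw [norm_sub_rev, ← neg_sub y x, inner_neg_right] at hlo
  have hGL : |⟪G y - G x, y - x⟫| ≤ |L| * ‖y - x‖ ^ 2 :=
    calc |⟪G y - G x, y - x⟫| ≤ ‖G y - G x‖ * ‖y - x‖ := abs_real_inner_le_norm _ _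
      _ ≤ |L| * ‖y - x‖ * ‖y - x‖ :=
        mul_le_mul_of_nonneg_right ((hG y).trans (by gcongr; exact le_abs_self L)) (norm_nonneg _)
      _ = |L| * ‖y - x‖ ^ 2 := by ring
  rw [inner_sub_left] at hGL
  have hsq0 := sq_nonneg ‖y - x‖
  constructor
  · nlinarith [abs_le.1 hGL, le_abs_self c, abs_nonneg L]
  · nlinarith [hg x y, le_abs_self c, abs_nonneg L]

theorem one_add_mul_pos_of_admissible {lam τ : ℝ} (hτ : 0 < τ) (hadm : lam < 0 → τ < -1 / lam) :
    0 < 1 + τ * lam := by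
  rcases le_or_gt 0 lam with h | h
  · nlinarith [mul_nonneg hτ.le h]
  · linarith [(lt_div_iff_of_neg h).1 (hadm h)]

/-- differentiability of the Moreau–Yosida regularization. -/
theorem statement5 (lam : ℝ) (f : H → EReal)
    (hf : ProperFn f) (hconv : LambdaConvex lam f) (hlsc : LowerSemicontinuous f)
    (τ : ℝ) (hτ : 0 < τ) (hadm : lam < 0 → τ < -1 / lam) (x : H) :
    HasGradientAt (moreau f τ) (τ⁻¹ • (x - Jres f τ x)) x ∧
    τ⁻¹ • (x - Jres f τ x) ∈ subdiff lam f (Jres f τ x) := by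
  have hκ := one_add_mul_pos_of_admissible hτ hadm
  have hμ : 0 < lam + τ⁻¹ := by
    have := mul_pos (inv_pos.2 hτ) hκ
    rwa [mul_add, mul_one, inv_mul_cancel_left₀ hτ.ne', add_comm] at this
  have hJ (y z : H) : proxObjective f τ y (Jres f τ y) ≤ proxObjective f τ y z :=
    proxObjective_Jres_le (exists_forall_proxObjective_le hf hconv hlsc hμ y) z
  have hLip (y : H) : ‖τ⁻¹ • (y - Jres f τ y) - τ⁻¹ • (x - Jres f τ x)‖
      ≤ τ⁻¹ * (1 + (1 + τ * lam)⁻¹) * ‖y - x‖ := by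
    rw [← smul_sub, norm_smul, Real.norm_of_nonneg (inv_nonneg.2 hτ.le), mul_assoc]
    gcongr
    calc ‖y - Jres f τ y - (x - Jres f τ x)‖ = ‖(y - x) - (Jres f τ y - Jres f τ x)‖ := by
          congr 1; abel
      _ ≤ ‖y - x‖ + ‖y - x‖ / (1 + τ * lam) :=
          (norm_sub_le _ _).trans (add_le_add_right (norm_Jres_sub_Jres_le hf hconv hτ hκ hJ x y) _)
      _ = (1 + (1 + τ * lam)⁻¹) * ‖y - x‖ := by ring
  exact ⟨hasGradientAt_of_le_inner_add_sq (moreau_le_add_inner hf hJ) hLip,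
    inv_smul_sub_Jres_mem_subdiff hf hconv (hJ x)⟩

end
end
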